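/- arXiv:2010.15505 — 3 statements merged into one kernel-verified Lean document; each statement's English description precedes it below -/
import Mathlib

section
/- Göpel's original duplication formula: for all real characteristics a, c, b, d and all complex u, v, θ[a,c;b,d](u,v)² = Σ_{(ε,δ)∈{0,1}²} Θ[a+ε, c+δ; 2b, 2d](2u, 2v) · Θ[ε, δ; 0, 0](0, 0). -/
open Complex

/-- Genus-two theta function with real characteristics `a c b d`
(upper characteristics `a, c`, lower characteristics `b, d`),
moduli `τ₁ τ₂ τ₁₂` and complex arguments `x y`. -/
noncomputable def theta (τ₁ τ₂ τ₁₂ : ℂ) (a c b d : ℝ) (x y : ℂ) : ℂ :=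
  ∑' p : ℤ × ℤ,
    Complex.exp
      ((Real.pi : ℂ) * Complex.I *
          (τ₁ * ((p.1 : ℂ) + (a : ℂ) / 2) ^ 2 + τ₂ * ((p.2 : ℂ) + (c : ℂ) / 2) ^ 2 +
            2 * τ₁₂ * ((p.1 : ℂ) + (a : ℂ) / 2) * ((p.2 : ℂ) + (c : ℂ) / 2)) +
        2 * (Real.pi : ℂ) * Complex.I *
          (((p.1 : ℂ) + (a : ℂ) / 2) * (x + (b : ℂ) / 2) +
            ((p.2 : ℂ) + (c : ℂ) / 2) * (y + (d : ℂ) / 2)))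

/-- The same theta function with doubled moduli `2τ₁, 2τ₂, 2τ₁₂`. -/
noncomputable def Theta2 (τ₁ τ₂ τ₁₂ : ℂ) (a c b d : ℝ) (x y : ℂ) : ℂ :=
  theta (2 * τ₁) (2 * τ₂) (2 * τ₁₂) a c b d x y

/-!
Expand `θ²` as an absolutely convergent double sum over pairs of lattice points `(p, q)`.
Each pair is uniquely `p = k + k' + e`, `q = k - k'` with `e ∈ {0,1}²` the parity of `p - q`,
and the parallelogram law `(x + y)² + (x - y)² = 2x² + 2y²` turns the sum of the exponents at
`p` and `q` into the exponent of the doubled-moduli series at `k` (characteristic shifted by `e`)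
plus that at `k'` (characteristic `e`). Summing over `k, k'` for fixed `e` gives the product
`Θ[a+e; 2b](2u) · Θ[e; 0](0)`.
-/

lemma exists_pos_mul_sq_add_sq_le {t₁ t₂ t₁₂ : ℝ} (h₁ : 0 < t₁) (h₂ : 0 < t₂)
    (h : t₁₂ ^ 2 < t₁ * t₂) :
    ∃ κ > 0, ∀ X W : ℝ, κ * (X ^ 2 + W ^ 2) ≤ t₁ * X ^ 2 + t₂ * W ^ 2 + 2 * t₁₂ * X * W := by
  -- `det / trace` is a lower bound for the smaller eigenvalue
  set κ := (t₁ * t₂ - t₁₂ ^ 2) / (t₁ + t₂)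
  have hκ : 0 < κ := div_pos (by linarith) (by linarith)
  have hκ₁ : κ < t₁ := by
    rw [div_lt_iff₀ (by linarith)]; nlinarith [sq_nonneg t₁₂]
  have hdet : t₁₂ ^ 2 ≤ (t₁ - κ) * (t₂ - κ) := by
    have : κ * (t₁ + t₂) = t₁ * t₂ - t₁₂ ^ 2 := div_mul_cancel₀ _ (by linarith)
    nlinarith [sq_nonneg κ]
  refine ⟨κ, hκ, fun X W => ?_⟩
  have : 0 ≤ (t₁ - κ) * ((t₁ - κ) * X ^ 2 + (t₂ - κ) * W ^ 2 + 2 * t₁₂ * X * W) := by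
    nlinarith [sq_nonneg ((t₁ - κ) * X + t₁₂ * W), sq_nonneg W]
  nlinarith [(mul_nonneg_iff_of_pos_left (sub_pos.2 hκ₁)).1 this]

open Real in
lemma summable_exp_neg_sq_int (κ β t : ℝ) (hκ : 0 < κ) :
    Summable fun m : ℤ => rexp (-(π * κ * (m + t) ^ 2) - 2 * π * (m + t) * β) := by
  have hθ : Summable fun m : ℤ => ‖jacobiTheta₂_term m ((κ * t + β : ℝ) * I) (κ * I)‖ :=
    ((summable_jacobiTheta₂_term_iff _ _).2 (by simpa using hκ)).norm
  refine (hθ.mul_left (rexp (-(π * κ * t ^ 2) - 2 * π * t * β))).congr fun m => ?_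
  rw [norm_jacobiTheta₂_term, ← Real.exp_add]
  simp only [mul_im, ofReal_re, ofReal_im, I_re, I_im]
  ring_nf

noncomputable def thetaExponent (τ₁ τ₂ τ₁₂ : ℂ) (a c b d : ℝ) (x y : ℂ) (p : ℤ × ℤ) : ℂ :=
  (Real.pi : ℂ) * Complex.I *
      (τ₁ * ((p.1 : ℂ) + (a : ℂ) / 2) ^ 2 + τ₂ * ((p.2 : ℂ) + (c : ℂ) / 2) ^ 2 +
        2 * τ₁₂ * ((p.1 : ℂ) + (a : ℂ) / 2) * ((p.2 : ℂ) + (c : ℂ) / 2)) +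
    2 * (Real.pi : ℂ) * Complex.I *
      (((p.1 : ℂ) + (a : ℂ) / 2) * (x + (b : ℂ) / 2) +
        ((p.2 : ℂ) + (c : ℂ) / 2) * (y + (d : ℂ) / 2))

lemma theta_eq_tsum (τ₁ τ₂ τ₁₂ : ℂ) (a c b d : ℝ) (x y : ℂ) :
    theta τ₁ τ₂ τ₁₂ a c b d x y = ∑' p, exp (thetaExponent τ₁ τ₂ τ₁₂ a c b d x y p) := rfl

lemma re_thetaExponent (τ₁ τ₂ τ₁₂ : ℂ) (a c b d : ℝ) (x y : ℂ) (p : ℤ × ℤ) :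
    (thetaExponent τ₁ τ₂ τ₁₂ a c b d x y p).re =
      -(Real.pi * (τ₁.im * (p.1 + a / 2) ^ 2 + τ₂.im * (p.2 + c / 2) ^ 2 +
          2 * τ₁₂.im * (p.1 + a / 2) * (p.2 + c / 2))) -
        2 * Real.pi * ((p.1 + a / 2) * x.im + (p.2 + c / 2) * y.im) := by
  simp only [thetaExponent, pow_two, add_re, mul_re, ofReal_re, I_re, mul_zero, ofReal_im, I_im,
    mul_one, sub_self, intCast_re, div_ofNat_re, add_im, intCast_im, div_ofNat_im, zero_div,
    add_zero, sub_zero, mul_im, zero_mul, re_ofNat, im_ofNat, zero_add, zero_sub]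
  ring

lemma summable_norm_exp_thetaExponent {τ₁ τ₂ τ₁₂ : ℂ} (hτ₁ : 0 < τ₁.im) (hτ₂ : 0 < τ₂.im)
    (hτ : τ₁₂.im ^ 2 < τ₁.im * τ₂.im) (a c b d : ℝ) (x y : ℂ) :
    Summable fun p => ‖exp (thetaExponent τ₁ τ₂ τ₁₂ a c b d x y p)‖ := by
  obtain ⟨κ, hκ, hQ⟩ := exists_pos_mul_sq_add_sq_le hτ₁ hτ₂ hτ
  have hprod := (summable_exp_neg_sq_int κ x.im (a / 2) hκ).mul_of_nonneg
    (summable_exp_neg_sq_int κ y.im (c / 2) hκ) (fun _ => (Real.exp_pos _).le)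
    (fun _ => (Real.exp_pos _).le)
  refine hprod.of_nonneg_of_le (fun _ => norm_nonneg _) fun p => ?_
  rw [norm_exp, re_thetaExponent, ← Real.exp_add, Real.exp_le_exp]
  nlinarith [hQ (p.1 + a / 2) (p.2 + c / 2), Real.pi_pos]

def duplicationEquiv : (Fin 2 × Fin 2) × (ℤ × ℤ) × (ℤ × ℤ) ≃ (ℤ × ℤ) × (ℤ × ℤ) where
  toFun w := ((w.2.1.1 + w.2.2.1 + w.1.1, w.2.1.2 + w.2.2.2 + w.1.2),
    (w.2.1.1 - w.2.2.1, w.2.1.2 - w.2.2.2))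
  invFun z :=
    ((⟨((z.1.1 - z.2.1) % 2).toNat, by omega⟩, ⟨((z.1.2 - z.2.2) % 2).toNat, by omega⟩),
      (z.2.1 + (z.1.1 - z.2.1) / 2, z.2.2 + (z.1.2 - z.2.2) / 2),
      ((z.1.1 - z.2.1) / 2, (z.1.2 - z.2.2) / 2))
  left_inv := by
    rintro ⟨⟨⟨ε, hε⟩, ⟨δ, hδ⟩⟩, ⟨k, l⟩, ⟨k', l'⟩⟩
    simp only [Prod.mk.injEq, Fin.mk.injEq]
    omega
  right_inv := by
    rintro ⟨⟨m, n⟩, ⟨m', n'⟩⟩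
    simp only [Prod.mk.injEq]
    omega

lemma thetaExponent_add_thetaExponent (τ₁ τ₂ τ₁₂ : ℂ) (a c b d : ℝ) (u v : ℂ)
    (ε δ k l k' l' : ℤ) :
    thetaExponent τ₁ τ₂ τ₁₂ a c b d u v (k + k' + ε, l + l' + δ) +
        thetaExponent τ₁ τ₂ τ₁₂ a c b d u v (k - k', l - l') =
      thetaExponent (2 * τ₁) (2 * τ₂) (2 * τ₁₂) (a + ε) (c + δ) (2 * b) (2 * d) (2 * u) (2 * v)
          (k, l) +
        thetaExponent (2 * τ₁) (2 * τ₂) (2 * τ₁₂) ε δ 0 0 0 0 (k', l') := by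
  simp only [thetaExponent]
  push_cast
  ring

lemma theta_sq_eq_sum_tsum {τ₁ τ₂ τ₁₂ : ℂ} (hτ₁ : 0 < τ₁.im) (hτ₂ : 0 < τ₂.im)
    (hτ : τ₁₂.im ^ 2 < τ₁.im * τ₂.im) (a c b d : ℝ) (u v : ℂ) :
    theta τ₁ τ₂ τ₁₂ a c b d u v ^ 2 =
      ∑ εδ : Fin 2 × Fin 2, ∑' z,
        exp (thetaExponent τ₁ τ₂ τ₁₂ a c b d u v (duplicationEquiv (εδ, z)).1) *
          exp (thetaExponent τ₁ τ₂ τ₁₂ a c b d u v (duplicationEquiv (εδ, z)).2) := by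
  set f := fun p => exp (thetaExponent τ₁ τ₂ τ₁₂ a c b d u v p)
  have hf : Summable fun p => ‖f p‖ := summable_norm_exp_thetaExponent hτ₁ hτ₂ hτ a c b d u v
  have hff : Summable fun z : (ℤ × ℤ) × (ℤ × ℤ) => f z.1 * f z.2 :=
    summable_mul_of_summable_norm hf hf
  have hfe : Summable fun w => f (duplicationEquiv w).1 * f (duplicationEquiv w).2 :=
    duplicationEquiv.summable_iff.2 hff
  rw [sq, theta_eq_tsum, tsum_mul_tsum_of_summable_norm hf hf,
    ← duplicationEquiv.tsum_eq, hfe.tsum_prod, tsum_fintype]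

lemma Theta2_mul_Theta2 {τ₁ τ₂ τ₁₂ : ℂ} (hτ₁ : 0 < τ₁.im) (hτ₂ : 0 < τ₂.im)
    (hτ : τ₁₂.im ^ 2 < τ₁.im * τ₂.im) (a c b d : ℝ) (u v : ℂ) (ε δ : ℤ) :
    Theta2 τ₁ τ₂ τ₁₂ (a + ε) (c + δ) (2 * b) (2 * d) (2 * u) (2 * v) *
        Theta2 τ₁ τ₂ τ₁₂ ε δ 0 0 0 0 =
      ∑' z : (ℤ × ℤ) × (ℤ × ℤ),
        exp (thetaExponent τ₁ τ₂ τ₁₂ a c b d u v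
          (z.1.1 + z.2.1 + ε, z.1.2 + z.2.2 + δ)) *
        exp (thetaExponent τ₁ τ₂ τ₁₂ a c b d u v (z.1.1 - z.2.1, z.1.2 - z.2.2)) := by
  have him (τ : ℂ) : (2 * τ).im = 2 * τ.im := by simp
  have h2τ₁ : 0 < (2 * τ₁).im := by rw [him]; positivity
  have h2τ₂ : 0 < (2 * τ₂).im := by rw [him]; positivity
  have h2τ : (2 * τ₁₂).im ^ 2 < (2 * τ₁).im * (2 * τ₂).im := by rw [him, him, him]; nlinarith
  rw [Theta2, Theta2, theta_eq_tsum, theta_eq_tsum,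
    tsum_mul_tsum_of_summable_norm (summable_norm_exp_thetaExponent h2τ₁ h2τ₂ h2τ ..)
      (summable_norm_exp_thetaExponent h2τ₁ h2τ₂ h2τ ..)]
  refine tsum_congr fun z => ?_
  rw [← exp_add, ← exp_add, thetaExponent_add_thetaExponent]

theorem goepel_original_duplication (τ₁ τ₂ τ₁₂ : ℂ)
    (hτ₁ : 0 < τ₁.im) (hτ₂ : 0 < τ₂.im) (hτ : τ₁₂.im ^ 2 < τ₁.im * τ₂.im)
    (a c b d : ℝ) (u v : ℂ) :
    theta τ₁ τ₂ τ₁₂ a c b d u v ^ 2 =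
      ∑ ε ∈ Finset.range 2, ∑ δ ∈ Finset.range 2,
        Theta2 τ₁ τ₂ τ₁₂ (a + ε) (c + δ) (2 * b) (2 * d) (2 * u) (2 * v) *
          Theta2 τ₁ τ₂ τ₁₂ ε δ 0 0 0 0 := by
  rw [theta_sq_eq_sum_tsum hτ₁ hτ₂ hτ, Fintype.sum_prod_type, Finset.sum_range]
  refine Fintype.sum_congr _ _ fun ε => ?_
  rw [Finset.sum_range]
  refine Fintype.sum_congr _ _ fun δ => ?_
  have h := Theta2_mul_Theta2 hτ₁ hτ₂ hτ a c b d u v ε δ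
  push_cast at h
  exact h.symm
end

section
/- Two-term functional relation for lower characteristic (0,1): for all real a, c and all complex u, v, θ[a,c;0,1](u,v) · θ[a,c;0,0](u,v) = Θ[a,c;0,1](2u,2v) · Θ[0,0;0,1](0,0) + Θ[a+1,c;0,1](2u,2v) · Θ[1,0;0,1](0,0). -/
open Complex

/-!
Write `m = K + J + ε`, `m' = K - J` coordinatewise with a parity vector `ε ∈ {0,1}²`. Since
`A² + A'² = ((A + A')² + (A - A')²) / 2`, the product of the terms of two theta series with the same
upper characteristic at `(m, n)` and `(m', n')` is the product of the terms of two theta series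
with doubled moduli at `K` and `J`, with upper characteristics shifted by `ε`. Summing over the four
parity classes expresses `θ · θ` as a sum of four products of `Θ`s; for the
lower characteristic `(0, 1)` the two classes with `ε₂ = 1` carry the factor
`Θ[ε₁, 1; 0, 1](0, 0)`, which vanishes because that characteristic is odd.
-/

def InSiegelUpperHalfSpace (τ₁ τ₂ τ₁₂ : ℂ) : Prop :=
  0 < τ₁.im ∧ 0 < τ₂.im ∧ τ₁₂.im ^ 2 < τ₁.im * τ₂.im

lemma InSiegelUpperHalfSpace.two_mul {τ₁ τ₂ τ₁₂ : ℂ} (h : InSiegelUpperHalfSpace τ₁ τ₂ τ₁₂) :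
    InSiegelUpperHalfSpace (2 * τ₁) (2 * τ₂) (2 * τ₁₂) := by
  obtain ⟨h₁, h₂, h₁₂⟩ := h
  refine ⟨?_, ?_, ?_⟩ <;> simp only [Complex.mul_im, Complex.re_ofNat, Complex.im_ofNat] <;> nlinarith

noncomputable def thetaTerm (τ₁ τ₂ τ₁₂ : ℂ) (a c b d : ℝ) (x y : ℂ) (p : ℤ × ℤ) : ℂ :=
  Complex.exp
      ((Real.pi : ℂ) * Complex.I *
          (τ₁ * ((p.1 : ℂ) + (a : ℂ) / 2) ^ 2 + τ₂ * ((p.2 : ℂ) + (c : ℂ) / 2) ^ 2 +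
            2 * τ₁₂ * ((p.1 : ℂ) + (a : ℂ) / 2) * ((p.2 : ℂ) + (c : ℂ) / 2)) +
        2 * (Real.pi : ℂ) * Complex.I *
          (((p.1 : ℂ) + (a : ℂ) / 2) * (x + (b : ℂ) / 2) +
            ((p.2 : ℂ) + (c : ℂ) / 2) * (y + (d : ℂ) / 2)))

lemma norm_thetaTerm (τ₁ τ₂ τ₁₂ : ℂ) (a c b d : ℝ) (x y : ℂ) (p : ℤ × ℤ) :
    ‖thetaTerm τ₁ τ₂ τ₁₂ a c b d x y p‖ =
      Real.exp (-Real.pi * (τ₁.im * (p.1 + a / 2) ^ 2 + τ₂.im * (p.2 + c / 2) ^ 2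
          + 2 * τ₁₂.im * (p.1 + a / 2) * (p.2 + c / 2))
        - 2 * Real.pi * ((p.1 + a / 2) * x.im + (p.2 + c / 2) * y.im)) := by
  have hA : (p.1 : ℂ) + (a : ℂ) / 2 = ((p.1 + a / 2 : ℝ) : ℂ) := by push_cast; ring
  have hC : (p.2 : ℂ) + (c : ℂ) / 2 = ((p.2 + c / 2 : ℝ) : ℂ) := by push_cast; ring
  rw [thetaTerm, Complex.norm_exp, hA, hC]
  congr 1
  simp only [pow_two, add_re, add_im, mul_re, mul_im, ofReal_re, ofReal_im, I_re, I_im, re_ofNat,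
    im_ofNat, div_ofNat_re, div_ofNat_im]
  ring

lemma det_div_trace_mul_sq_add_sq_le {y₁ y₂ y₁₂ : ℝ} (h : 0 < y₁ + y₂) (A C : ℝ) :
    (y₁ * y₂ - y₁₂ ^ 2) / (y₁ + y₂) * (A ^ 2 + C ^ 2) ≤
      y₁ * A ^ 2 + y₂ * C ^ 2 + 2 * y₁₂ * A * C := by
  rw [div_mul_eq_mul_div, div_le_iff₀ h]
  nlinarith [sq_nonneg (y₁ * A + y₁₂ * C), sq_nonneg (y₂ * C + y₁₂ * A)]

lemma summable_exp_neg_sq_add {t : ℝ} (ht : 0 < t) (α X : ℝ) :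
    Summable fun n : ℤ => Real.exp (-Real.pi * t * (n + α) ^ 2 - 2 * Real.pi * (n + α) * X) := by
  have h := ((summable_jacobiTheta₂_term_iff (I * (t * α + X)) (I * t)).mpr
    (by simpa using ht)).norm.mul_left (Real.exp (-Real.pi * t * α ^ 2 - 2 * Real.pi * α * X))
  refine h.congr fun n => ?_
  rw [norm_jacobiTheta₂_term, ← Real.exp_add]
  congr 1
  simp only [mul_im, add_im, mul_re, add_re, I_re, I_im, ofReal_re, ofReal_im]
  ring

lemma summable_norm_thetaTerm {τ₁ τ₂ τ₁₂ : ℂ} (hτ : InSiegelUpperHalfSpace τ₁ τ₂ τ₁₂)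
    (a c b d : ℝ) (x y : ℂ) : Summable fun p => ‖thetaTerm τ₁ τ₂ τ₁₂ a c b d x y p‖ := by
  obtain ⟨h₁, h₂, h₁₂⟩ := hτ
  set δ := (τ₁.im * τ₂.im - τ₁₂.im ^ 2) / (τ₁.im + τ₂.im)
  have hδ : 0 < δ := div_pos (by linarith) (by linarith)
  have hmaj := (summable_exp_neg_sq_add hδ (a / 2) x.im).mul_of_nonneg
    (summable_exp_neg_sq_add hδ (c / 2) y.im) (fun _ => (Real.exp_pos _).le)
    (fun _ => (Real.exp_pos _).le)
  refine hmaj.of_nonneg_of_le (fun _ => norm_nonneg _) fun p => ?_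
  rw [norm_thetaTerm, ← Real.exp_add, Real.exp_le_exp]
  have hQ := mul_le_mul_of_nonneg_left (det_div_trace_mul_sq_add_sq_le (y₁ := τ₁.im) (y₂ := τ₂.im)
    (y₁₂ := τ₁₂.im) (by linarith) (p.1 + a / 2) (p.2 + c / 2)) Real.pi_pos.le
  linarith

def parityEquiv : Bool × ℤ × ℤ ≃ ℤ × ℤ where
  toFun q := (q.2.1 + q.2.2 + q.1.toInt, q.2.1 - q.2.2)
  invFun p := ((p.1 + p.2) % 2 == 1, (p.1 + p.2) / 2, p.1 - (p.1 + p.2) / 2 - (p.1 + p.2) % 2)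
  left_inv := by
    rintro ⟨ε, K, J⟩
    refine Prod.ext ?_ (Prod.ext ?_ ?_) <;> cases ε <;> simp <;> omega
  right_inv := by
    rintro ⟨m, m'⟩
    rcases Int.emod_two_eq (m + m') with h | h <;> simp [h, Prod.ext_iff] <;> omega

def pairParityEquiv : (Bool × Bool) × (ℤ × ℤ) × (ℤ × ℤ) ≃ (ℤ × ℤ) × (ℤ × ℤ) :=
  ((Equiv.refl _).prodCongr (Equiv.prodProdProdComm _ _ _ _)).trans <|
    (Equiv.prodProdProdComm _ _ _ _).trans <|
      (parityEquiv.prodCongr parityEquiv).trans (Equiv.prodProdProdComm _ _ _ _)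

@[simp]
lemma pairParityEquiv_apply (ε : Bool × Bool) (z : (ℤ × ℤ) × (ℤ × ℤ)) :
    pairParityEquiv (ε, z) = ((z.1.1 + z.2.1 + ε.1.toInt, z.1.2 + z.2.2 + ε.2.toInt),
      (z.1.1 - z.2.1, z.1.2 - z.2.2)) := rfl

lemma thetaTerm_mul_thetaTerm (τ₁ τ₂ τ₁₂ : ℂ) (a c b d b' d' : ℝ) (x y x' y' : ℂ) (e₁ e₂ : ℤ)
    (K J : ℤ × ℤ) :
    thetaTerm τ₁ τ₂ τ₁₂ a c b d x y (K.1 + J.1 + e₁, K.2 + J.2 + e₂) *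
        thetaTerm τ₁ τ₂ τ₁₂ a c b' d' x' y' (K.1 - J.1, K.2 - J.2) =
      thetaTerm (2 * τ₁) (2 * τ₂) (2 * τ₁₂) (a + e₁) (c + e₂) (b + b') (d + d') (x + x') (y + y') K *
        thetaTerm (2 * τ₁) (2 * τ₂) (2 * τ₁₂) e₁ e₂ (b - b') (d - d') (x - x') (y - y') J := by
  simp only [thetaTerm, ← Complex.exp_add]
  congr 1
  push_cast
  ring

theorem theta_mul_theta {τ₁ τ₂ τ₁₂ : ℂ} (hτ : InSiegelUpperHalfSpace τ₁ τ₂ τ₁₂)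
    (a c b d b' d' : ℝ) (x y x' y' : ℂ) :
    theta τ₁ τ₂ τ₁₂ a c b d x y * theta τ₁ τ₂ τ₁₂ a c b' d' x' y' =
      ∑ ε : Bool × Bool,
        Theta2 τ₁ τ₂ τ₁₂ (a + ε.1.toInt) (c + ε.2.toInt) (b + b') (d + d') (x + x') (y + y') *
          Theta2 τ₁ τ₂ τ₁₂ ε.1.toInt ε.2.toInt (b - b') (d - d') (x - x') (y - y') := by
  have hs := summable_norm_thetaTerm hτ a c b d x y
  have hs' := summable_norm_thetaTerm hτ a c b' d' x' y'
  set F : (ℤ × ℤ) × (ℤ × ℤ) → ℂ := fun z =>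
    thetaTerm τ₁ τ₂ τ₁₂ a c b d x y z.1 * thetaTerm τ₁ τ₂ τ₁₂ a c b' d' x' y' z.2
  have hF : Summable (F ∘ pairParityEquiv) :=
    pairParityEquiv.summable_iff.mpr (summable_mul_of_summable_norm hs hs')
  calc _ = ∑' z, F z := tsum_mul_tsum_of_summable_norm hs hs'
    _ = ∑' q, F (pairParityEquiv q) := (pairParityEquiv.tsum_eq F).symm
    _ = ∑ ε : Bool × Bool, ∑' z, F (pairParityEquiv (ε, z)) :=
      (hF.tsum_prod' hF.prod_factor).trans (tsum_fintype _)
    _ = _ := Finset.sum_congr rfl fun ε _ => by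
      simp only [F, pairParityEquiv_apply, thetaTerm_mul_thetaTerm]
      exact (tsum_mul_tsum_of_summable_norm (summable_norm_thetaTerm hτ.two_mul _ _ _ _ _ _)
        (summable_norm_thetaTerm hτ.two_mul _ _ _ _ _ _)).symm

theorem theta_intCast_one_zero_one_zero_zero (τ₁ τ₂ τ₁₂ : ℂ) (k : ℤ) :
    theta τ₁ τ₂ τ₁₂ k 1 0 1 0 0 = 0 := by
  -- `p ↦ -p - (k, 1)` negates both shifted indices: the quadratic part is unchanged, while the
  -- lower characteristic `1` turns the sign.
  let σ : ℤ × ℤ ≃ ℤ × ℤ := (Equiv.neg _).trans (Equiv.addRight (-k, -1))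
  have hσ : ∀ p, thetaTerm τ₁ τ₂ τ₁₂ k 1 0 1 0 0 (σ p) = -thetaTerm τ₁ τ₂ τ₁₂ k 1 0 1 0 0 p := by
    intro p
    rw [thetaTerm, thetaTerm, neg_eq_neg_one_mul, ← Complex.exp_pi_mul_I, ← Complex.exp_add,
      Complex.exp_eq_exp_iff_exists_int]
    refine ⟨-p.2 - 1, ?_⟩
    simp only [σ, Equiv.trans_apply, Equiv.neg_apply, Equiv.coe_addRight, Prod.fst_add,
      Prod.snd_add, Prod.fst_neg, Prod.snd_neg]
    push_cast
    ring
  have h := σ.tsum_eq (thetaTerm τ₁ τ₂ τ₁₂ k 1 0 1 0 0)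
  rw [tsum_congr hσ, tsum_neg] at h
  exact self_eq_neg.mp h.symm

theorem two_term_relation_01 (τ₁ τ₂ τ₁₂ : ℂ)
    (hτ₁ : 0 < τ₁.im) (hτ₂ : 0 < τ₂.im) (hτ : τ₁₂.im ^ 2 < τ₁.im * τ₂.im)
    (a c : ℝ) (u v : ℂ) :
    theta τ₁ τ₂ τ₁₂ a c 0 1 u v * theta τ₁ τ₂ τ₁₂ a c 0 0 u v =
      Theta2 τ₁ τ₂ τ₁₂ a c 0 1 (2 * u) (2 * v) * Theta2 τ₁ τ₂ τ₁₂ 0 0 0 1 0 0 +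
        Theta2 τ₁ τ₂ τ₁₂ (a + 1) c 0 1 (2 * u) (2 * v) * Theta2 τ₁ τ₂ τ₁₂ 1 0 0 1 0 0 := by
  have h₀ := theta_intCast_one_zero_one_zero_zero (2 * τ₁) (2 * τ₂) (2 * τ₁₂) 0
  have h₁ := theta_intCast_one_zero_one_zero_zero (2 * τ₁) (2 * τ₂) (2 * τ₁₂) 1
  push_cast at h₀ h₁
  rw [theta_mul_theta ⟨hτ₁, hτ₂, hτ⟩]
  simp only [Fintype.sum_prod_type, Fintype.sum_bool, Bool.toInt_true, Bool.toInt_false,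
    Int.cast_one, Int.cast_zero, add_zero, sub_self, sub_zero, ← two_mul, Theta2, h₀, h₁, mul_zero]
  ring
end

section
/- Constants relations for lower characteristic (0,1): with α = Θ[0,0;0,1](0,0) and β = Θ[1,0;0,1](0,0), one has θ[0,0;0,1](0,0) · θ[0,0;0,0](0,0) = α² + β² and θ[1,0;0,1](0,0) · θ[1,0;0,0](0,0) = 2αβ. -/
open Complex

/-!
The parallelogram identity `Q(x) + Q(x') = 2 Q((x + x') / 2) + 2 Q((x - x') / 2)` for the quadratic
form of the period matrix turns a product of two theta constants into a sum of products of theta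
constants with doubled moduli: writing a pair of lattice points as `(p + q + ε, p - q)` with
`ε ∈ {0, 1}²` gives `θ[a,c;b,d] θ[a,c;0,0] = Σ_ε Θ[a+ε₁,c+ε₂;b,d] Θ[ε₁,ε₂;b,d]`.
For integral characteristics with `ab + cd` odd the reflection `p ↦ -p - (a, c)` changes the sign
of every summand, so for the lower characteristic `(0, 1)` the terms with `ε₂ = 1` vanish;
shifting an upper characteristic by `2` only reindexes the sum.
-/

open Real

noncomputable def thetaSummand (τ₁ τ₂ τ₁₂ : ℂ) (b d u v : ℝ) : ℂ :=
  cexp (π * I * (τ₁ * u ^ 2 + τ₂ * v ^ 2 + 2 * τ₁₂ * u * v + b * u + d * v))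

theorem theta_zero_eq_tsum (τ₁ τ₂ τ₁₂ : ℂ) (a c b d : ℝ) :
    theta τ₁ τ₂ τ₁₂ a c b d 0 0 =
      ∑' p : ℤ × ℤ, thetaSummand τ₁ τ₂ τ₁₂ b d (p.1 + a / 2) (p.2 + c / 2) := by
  refine tsum_congr fun p => ?_
  rw [thetaSummand]
  push_cast
  ring_nf

theorem norm_thetaSummand (τ₁ τ₂ τ₁₂ : ℂ) (b d u v : ℝ) :
    ‖thetaSummand τ₁ τ₂ τ₁₂ b d u v‖ =
      rexp (-π * (τ₁.im * u ^ 2 + τ₂.im * v ^ 2 + 2 * τ₁₂.im * u * v)) := by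
  rw [thetaSummand, Complex.norm_exp]
  congr 1
  simp [← ofReal_pow]

theorem thetaSummand_mul_thetaSummand (τ₁ τ₂ τ₁₂ : ℂ) (b d u v u' v' : ℝ) :
    thetaSummand τ₁ τ₂ τ₁₂ b d u v * thetaSummand τ₁ τ₂ τ₁₂ 0 0 u' v' =
      thetaSummand (2 * τ₁) (2 * τ₂) (2 * τ₁₂) b d ((u + u') / 2) ((v + v') / 2) *
        thetaSummand (2 * τ₁) (2 * τ₂) (2 * τ₁₂) b d ((u - u') / 2) ((v - v') / 2) := by
  simp only [thetaSummand, ← Complex.exp_add]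
  congr 1
  push_cast
  ring

theorem exists_pos_mul_sq_add_sq_le_s11 {A B C : ℝ} (hA : 0 < A) (h : B ^ 2 < A * C) :
    ∃ ε > 0, ∀ u v : ℝ, ε * (u ^ 2 + v ^ 2) ≤ A * u ^ 2 + C * v ^ 2 + 2 * B * u * v := by
  have hC : 0 < C := pos_of_mul_pos_right ((sq_nonneg B).trans_lt h) hA.le
  refine ⟨(A * C - B ^ 2) / (A + C), by apply div_pos <;> linarith, fun u v => ?_⟩
  rw [div_mul_eq_mul_div, div_le_iff₀ (by linarith)]
  -- the slack, multiplied by `A + C`, is `(A * u + B * v) ^ 2 + (B * u + C * v) ^ 2`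
  nlinarith [sq_nonneg (A * u + B * v), sq_nonneg (B * u + C * v)]

theorem summable_exp_neg_mul_add_sq {ε : ℝ} (hε : 0 < ε) (α : ℝ) :
    Summable fun n : ℤ => rexp (-(ε * (n + α) ^ 2)) := by
  refine (summable_pow_mul_jacobiTheta₂_term_bound (ε * |α| / π) (T := ε / π) (by positivity) 0
    ).of_nonneg_of_le (fun _ => (exp_pos _).le) fun n => ?_
  rw [pow_zero, one_mul, exp_le_exp]
  field_simp
  rw [Int.cast_abs]
  nlinarith [neg_abs_le (α * n), abs_mul α n, sq_nonneg α]

theorem summable_norm_thetaSummand {τ₁ τ₂ τ₁₂ : ℂ} (h₁ : 0 < τ₁.im)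
    (h : τ₁₂.im ^ 2 < τ₁.im * τ₂.im) (b d α β : ℝ) :
    Summable fun p : ℤ × ℤ => ‖thetaSummand τ₁ τ₂ τ₁₂ b d (p.1 + α) (p.2 + β)‖ := by
  obtain ⟨ε, hε, hq⟩ := exists_pos_mul_sq_add_sq_le_s11 h₁ h
  have hπε : 0 < π * ε := by positivity
  refine ((summable_exp_neg_mul_add_sq hπε α).mul_of_nonneg (summable_exp_neg_mul_add_sq hπε β)
    (fun _ => (exp_pos _).le) fun _ => (exp_pos _).le).of_nonneg_of_le (fun _ => norm_nonneg _)
    fun p => ?_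
  rw [norm_thetaSummand, ← Real.exp_add, exp_le_exp]
  nlinarith [hq (p.1 + α) (p.2 + β), pi_pos]

def sumDiffEquiv : (Fin 2 × Fin 2) × (ℤ × ℤ) × (ℤ × ℤ) ≃ (ℤ × ℤ) × (ℤ × ℤ) where
  toFun x := ((x.2.1.1 + x.2.2.1 + x.1.1, x.2.1.2 + x.2.2.2 + x.1.2),
    (x.2.1.1 - x.2.2.1, x.2.1.2 - x.2.2.2))
  invFun y := ((⟨((y.1.1 - y.2.1) % 2).toNat, by omega⟩, ⟨((y.1.2 - y.2.2) % 2).toNat, by omega⟩),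
    (y.2.1 + (y.1.1 - y.2.1) / 2, y.2.2 + (y.1.2 - y.2.2) / 2),
    ((y.1.1 - y.2.1) / 2, (y.1.2 - y.2.2) / 2))
  left_inv x := by
    ext <;> simp only <;> omega
  right_inv y := by
    ext <;> simp only <;> omega

theorem theta_zero_mul_theta_zero_eq_sum {τ₁ τ₂ τ₁₂ : ℂ} (h₁ : 0 < τ₁.im)
    (h : τ₁₂.im ^ 2 < τ₁.im * τ₂.im) (a c b d : ℝ) :
    theta τ₁ τ₂ τ₁₂ a c b d 0 0 * theta τ₁ τ₂ τ₁₂ a c 0 0 0 0 =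
      ∑ e : Fin 2, ∑ f : Fin 2,
        Theta2 τ₁ τ₂ τ₁₂ (a + (e : ℕ)) (c + (f : ℕ)) b d 0 0 *
          Theta2 τ₁ τ₂ τ₁₂ (e : ℕ) (f : ℕ) b d 0 0 := by
  have h₁' : 0 < (2 * τ₁).im := by simpa using h₁
  have h' : (2 * τ₁₂).im ^ 2 < (2 * τ₁).im * (2 * τ₂).im := by simp; nlinarith
  have hs := summable_norm_thetaSummand h₁ h b d (a / 2) (c / 2)
  have hs₀ := summable_norm_thetaSummand h₁ h 0 0 (a / 2) (c / 2)
  have hprod := sumDiffEquiv.summable_iff.mpr (summable_mul_of_summable_norm hs hs₀)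
  simp only [Function.comp_def] at hprod
  rw [theta_zero_eq_tsum, theta_zero_eq_tsum, tsum_mul_tsum_of_summable_norm hs hs₀,
    ← sumDiffEquiv.tsum_eq, hprod.tsum_prod, tsum_fintype, Fintype.sum_prod_type]
  refine Finset.sum_congr rfl fun e _ => Finset.sum_congr rfl fun f _ => ?_
  rw [Theta2, Theta2, theta_zero_eq_tsum, theta_zero_eq_tsum, tsum_mul_tsum_of_summable_norm
    (summable_norm_thetaSummand h₁' h' _ _ _ _) (summable_norm_thetaSummand h₁' h' _ _ _ _)]
  refine tsum_congr fun x => ?_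
  rw [sumDiffEquiv, Equiv.coe_fn_mk, thetaSummand_mul_thetaSummand]
  congr 1 <;> congr 1 <;> push_cast <;> ring

theorem theta_add_two (τ₁ τ₂ τ₁₂ : ℂ) (a c b d : ℝ) (x y : ℂ) :
    theta τ₁ τ₂ τ₁₂ (a + 2) c b d x y = theta τ₁ τ₂ τ₁₂ a c b d x y := by
  rw [theta, theta, ← ((Equiv.subRight (1 : ℤ)).prodCongr (Equiv.refl ℤ)).tsum_eq]
  refine tsum_congr fun p => ?_
  simp only [Equiv.prodCongr_apply, Equiv.subRight_apply, Equiv.refl_apply, Prod.map]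
  push_cast
  ring_nf

theorem theta_zero_eq_zero_of_odd (τ₁ τ₂ τ₁₂ : ℂ) (a c b d : ℤ) (h : Odd (a * b + c * d)) :
    theta τ₁ τ₂ τ₁₂ a c b d 0 0 = 0 := by
  obtain ⟨k, hk⟩ := h
  have hk' : (a * b + c * d : ℂ) = 2 * k + 1 := by exact_mod_cast hk
  set f := fun p : ℤ × ℤ => thetaSummand τ₁ τ₂ τ₁₂ b d (p.1 + a / 2) (p.2 + c / 2)
  let reflect : ℤ × ℤ ≃ ℤ × ℤ := (Equiv.neg _).trans (Equiv.subRight (a, c))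
  have hf : ∀ p, f (reflect p) = -f p := by
    intro p
    simp only [f, thetaSummand]
    rw [← mul_neg_one, ← exp_pi_mul_I, ← Complex.exp_add]
    refine Complex.exp_eq_exp_iff_exists_int.mpr ⟨-(b * p.1 + d * p.2 + k + 1), ?_⟩
    simp only [reflect, Equiv.trans_apply, Equiv.neg_apply, Equiv.subRight_apply, Prod.fst_sub,
      Prod.snd_sub, Prod.fst_neg, Prod.snd_neg]
    push_cast
    linear_combination (-π * I) * hk'
  have hsum := reflect.tsum_eq f
  rw [tsum_congr hf, tsum_neg] at hsum
  rw [theta_zero_eq_tsum]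
  exact CharZero.neg_eq_self_iff.mp hsum

theorem constants_relations_01_general (τ₁ τ₂ τ₁₂ : ℂ)
    (hτ₁ : 0 < τ₁.im) (hτ : τ₁₂.im ^ 2 < τ₁.im * τ₂.im) :
    theta τ₁ τ₂ τ₁₂ 0 0 0 1 0 0 * theta τ₁ τ₂ τ₁₂ 0 0 0 0 0 0 =
        Theta2 τ₁ τ₂ τ₁₂ 0 0 0 1 0 0 ^ 2 + Theta2 τ₁ τ₂ τ₁₂ 1 0 0 1 0 0 ^ 2 ∧
      theta τ₁ τ₂ τ₁₂ 1 0 0 1 0 0 * theta τ₁ τ₂ τ₁₂ 1 0 0 0 0 0 =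
        2 * Theta2 τ₁ τ₂ τ₁₂ 0 0 0 1 0 0 * Theta2 τ₁ τ₂ τ₁₂ 1 0 0 1 0 0 := by
  have hodd (e : ℤ) : Theta2 τ₁ τ₂ τ₁₂ e 1 0 1 0 0 = 0 := by
    simpa [Theta2] using theta_zero_eq_zero_of_odd (2 * τ₁) (2 * τ₂) (2 * τ₁₂) e 1 0 1 (by simp)
  obtain ⟨hodd₀, hodd₁, hodd₂⟩ : Theta2 τ₁ τ₂ τ₁₂ 0 1 0 1 0 0 = 0 ∧
      Theta2 τ₁ τ₂ τ₁₂ 1 1 0 1 0 0 = 0 ∧ Theta2 τ₁ τ₂ τ₁₂ 2 1 0 1 0 0 = 0 := by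
    exact ⟨mod_cast hodd 0, mod_cast hodd 1, mod_cast hodd 2⟩
  have hshift : Theta2 τ₁ τ₂ τ₁₂ 2 0 0 1 0 0 = Theta2 τ₁ τ₂ τ₁₂ 0 0 0 1 0 0 := by
    simpa [Theta2] using theta_add_two (2 * τ₁) (2 * τ₂) (2 * τ₁₂) 0 0 0 1 0 0
  have h₀ := theta_zero_mul_theta_zero_eq_sum hτ₁ hτ 0 0 0 1
  have h₁ := theta_zero_mul_theta_zero_eq_sum hτ₁ hτ 1 0 0 1
  norm_num [Fin.sum_univ_two, hodd₀, hodd₁, hodd₂, hshift] at h₀ h₁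
  constructor
  · linear_combination h₀
  · linear_combination h₁

theorem constants_relations_01 (τ₁ τ₂ τ₁₂ : ℂ)
    (hτ₁ : 0 < τ₁.im) (hτ₂ : 0 < τ₂.im) (hτ : τ₁₂.im ^ 2 < τ₁.im * τ₂.im) :
    theta τ₁ τ₂ τ₁₂ 0 0 0 1 0 0 * theta τ₁ τ₂ τ₁₂ 0 0 0 0 0 0 =
        Theta2 τ₁ τ₂ τ₁₂ 0 0 0 1 0 0 ^ 2 + Theta2 τ₁ τ₂ τ₁₂ 1 0 0 1 0 0 ^ 2 ∧
      theta τ₁ τ₂ τ₁₂ 1 0 0 1 0 0 * theta τ₁ τ₂ τ₁₂ 1 0 0 0 0 0 =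
        2 * Theta2 τ₁ τ₂ τ₁₂ 0 0 0 1 0 0 * Theta2 τ₁ τ₂ τ₁₂ 1 0 0 1 0 0 :=
  constants_relations_01_general τ₁ τ₂ τ₁₂ hτ₁ hτ
end
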